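/- arXiv:1705.03481 — 5 statements merged into one kernel-verified Lean document; each statement's English description precedes it below -/
import Mathlib

section
/- The bilinear pairing (a, b) ↦ ε(a·b) on A = R[X]/((X - x₁)(X - x₂)) (where ε sends 1 ↦ 0, X ↦ 1) is non-degenerate when R is an integral domain; that is, if ε(a·b) = 0 for all b ∈ A then a = 0. -/
open Polynomial

theorem AdjoinRoot.span_one_root_eq_top {R : Type*} [CommRing R] {f : R[X]} (hf : f.Monic)
    (hdeg : f.natDegree ≤ 2) : Submodule.span R {1, root f} = ⊤ := by
  nontriviality R
  refine Submodule.eq_top_iff'.mpr fun a => ?_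
  obtain ⟨q, hq, rfl⟩ : ∃ q : R[X], q.degree ≤ 1 ∧ mk f q = a := by
    obtain ⟨p, rfl⟩ := mk_surjective a
    refine ⟨p %ₘ f, ?_, by rw [← modByMonicHom_mk hf, mk_leftInverse hf]⟩
    have h := (degree_modByMonic_lt p hf).trans_le (degree_le_of_natDegree_le hdeg)
    exact Order.le_of_lt_succ (by exact_mod_cast h)
  rw [eq_X_add_C_of_degree_le_one hq, Submodule.mem_span_pair]
  refine ⟨q.coeff 0, q.coeff 1, ?_⟩
  rw [map_add, map_mul, mk_C, mk_C, mk_X, Algebra.smul_def, Algebra.smul_def, mul_one, add_comm]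
  rfl

theorem eq_zero_of_forall_map_mul_eq_zero {R A : Type*} [CommSemiring R] [Semiring A]
    [Algebra R A] {x : A} (hspan : Submodule.span R {1, x} = ⊤) (ε : A →ₗ[R] R)
    (hε1 : ε 1 = 0) (hεx : ε x = 1) {a : A} (ha : ∀ b, ε (a * b) = 0) : a = 0 := by
  obtain ⟨c, d, rfl⟩ := Submodule.mem_span_pair.mp (hspan ▸ Submodule.mem_top : a ∈ _)
  have hd : d = 0 := by simpa [hε1, hεx] using ha 1
  have hc : c = 0 := by simpa [hd, hεx] using ha x
  simp [hc, hd]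

theorem stmt4_general (R : Type*) [CommRing R] (x₁ x₂ : R)
    (ε : (Polynomial R ⧸ Ideal.span {(X - C x₁) * (X - C x₂)}) →ₗ[R] R)
    (hε1 : ε 1 = 0)
    (hεX : ε (Ideal.Quotient.mk (Ideal.span {(X - C x₁) * (X - C x₂)}) X) = 1)
    (a : Polynomial R ⧸ Ideal.span {(X - C x₁) * (X - C x₂)})
    (ha : ∀ b : Polynomial R ⧸ Ideal.span {(X - C x₁) * (X - C x₂)}, ε (a * b) = 0) :
    a = 0 := by
  have hmonic : ((X - C x₁) * (X - C x₂)).Monic := (monic_X_sub_C x₁).mul (monic_X_sub_C x₂)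
  have hdeg : ((X - C x₁) * (X - C x₂)).natDegree ≤ 2 :=
    natDegree_mul_le.trans (add_le_add (natDegree_X_sub_C_le _) (natDegree_X_sub_C_le _))
  -- `R[X] ⧸ Ideal.span {f}` is `AdjoinRoot f` by definition, and `root f` is the class of `X`.
  exact eq_zero_of_forall_map_mul_eq_zero (AdjoinRoot.span_one_root_eq_top hmonic hdeg) ε hε1 hεX ha

/-- Over an integral domain `R`, the pairing `(a, b) ↦ ε(a·b)` on
`A = R[X]/((X - x₁)(X - x₂))`, where `ε(1) = 0` and `ε(X) = 1`, is
non-degenerate: if `ε(a·b) = 0` for all `b` then `a = 0`. -/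
theorem stmt4 (R : Type*) [CommRing R] [IsDomain R] (x₁ x₂ : R)
    (ε : (Polynomial R ⧸ Ideal.span {(X - C x₁) * (X - C x₂)}) →ₗ[R] R)
    (hε1 : ε 1 = 0)
    (hεX : ε (Ideal.Quotient.mk (Ideal.span {(X - C x₁) * (X - C x₂)}) X) = 1)
    (a : Polynomial R ⧸ Ideal.span {(X - C x₁) * (X - C x₂)})
    (ha : ∀ b : Polynomial R ⧸ Ideal.span {(X - C x₁) * (X - C x₂)}, ε (a * b) = 0) :
    a = 0 :=
  stmt4_general R x₁ x₂ ε hε1 hεX a ha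
end

section
/- In the Frobenius algebra A = R[X]/((X - x₁)(X - x₂)) with counit ε(1) = 0, ε(X) = 1, the comultiplication Δ (the unique A-bimodule map A → A ⊗_R A determined by the pairing ε∘m) satisfies Δ(x_∘) = x_∘ ⊗ x_∘ and Δ(x_•) = x_• ⊗ x_•. -/
open Polynomial TensorProduct

set_option maxHeartbeats 2000000

/-- In the Frobenius algebra `A = R[X]/((X - x₁)(X - x₂))`, the comultiplication
`Δ` (with `Δ(1) = X ⊗ 1 + 1 ⊗ X - (x₁ + x₂)·(1 ⊗ 1)` and
`Δ(X) = X ⊗ X - x₁x₂·(1 ⊗ 1)`) satisfies `Δ(x_∘) = x_∘ ⊗ x_∘` and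
`Δ(x_•) = x_• ⊗ x_•`. -/
theorem stmt5 (R : Type*) [CommRing R] (x₁ x₂ : R)
    (Δ : (Polynomial R ⧸ Ideal.span {(X - C x₁) * (X - C x₂)}) →ₗ[R]
      ((Polynomial R ⧸ Ideal.span {(X - C x₁) * (X - C x₂)}) ⊗[R]
        (Polynomial R ⧸ Ideal.span {(X - C x₁) * (X - C x₂)})))
    (hΔ1 : Δ 1 =
      (Ideal.Quotient.mk (Ideal.span {(X - C x₁) * (X - C x₂)}) X) ⊗ₜ[R] 1 +
      1 ⊗ₜ[R] (Ideal.Quotient.mk (Ideal.span {(X - C x₁) * (X - C x₂)}) X) -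
      (x₁ + x₂) • ((1 : Polynomial R ⧸ Ideal.span {(X - C x₁) * (X - C x₂)}) ⊗ₜ[R] 1))
    (hΔX : Δ (Ideal.Quotient.mk (Ideal.span {(X - C x₁) * (X - C x₂)}) X) =
      (Ideal.Quotient.mk (Ideal.span {(X - C x₁) * (X - C x₂)}) X) ⊗ₜ[R]
        (Ideal.Quotient.mk (Ideal.span {(X - C x₁) * (X - C x₂)}) X) -
      (x₁ * x₂) • ((1 : Polynomial R ⧸ Ideal.span {(X - C x₁) * (X - C x₂)}) ⊗ₜ[R] 1)) :
    Δ (Ideal.Quotient.mk (Ideal.span {(X - C x₁) * (X - C x₂)}) (X - C x₁)) =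
      (Ideal.Quotient.mk (Ideal.span {(X - C x₁) * (X - C x₂)}) (X - C x₁)) ⊗ₜ[R]
        (Ideal.Quotient.mk (Ideal.span {(X - C x₁) * (X - C x₂)}) (X - C x₁)) ∧
    Δ (Ideal.Quotient.mk (Ideal.span {(X - C x₁) * (X - C x₂)}) (X - C x₂)) =
      (Ideal.Quotient.mk (Ideal.span {(X - C x₁) * (X - C x₂)}) (X - C x₂)) ⊗ₜ[R]
        (Ideal.Quotient.mk (Ideal.span {(X - C x₁) * (X - C x₂)}) (X - C x₂)) := by
  have key : ∀ a : R, (a - x₁) * (a - x₂) = 0 → Δ (Ideal.Quotient.mk (Ideal.span {(X - C x₁) * (X - C x₂)}) (X - C a)) =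
      (Ideal.Quotient.mk (Ideal.span {(X - C x₁) * (X - C x₂)}) (X - C a)) ⊗ₜ[R]
      (Ideal.Quotient.mk (Ideal.span {(X - C x₁) * (X - C x₂)}) (X - C a)) := by
    intro a ha
    have hC : Ideal.Quotient.mk (Ideal.span {(X - C x₁) * (X - C x₂)}) (C a) =
        a • (1 : Polynomial R ⧸ Ideal.span {(X - C x₁) * (X - C x₂)}) := by
      have hca : (C a : R[X]) = a • 1 := by
        rw [Algebra.smul_def, mul_one, algebraMap_eq]
      rw [hca, ← Ideal.Quotient.mkₐ_eq_mk R, map_smul, Ideal.Quotient.mkₐ_eq_mk, map_one]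
    have h1 : Ideal.Quotient.mk (Ideal.span {(X - C x₁) * (X - C x₂)}) (X - C a) =
        Ideal.Quotient.mk (Ideal.span {(X - C x₁) * (X - C x₂)}) X - a • 1 := by
      rw [map_sub, hC]
    rw [h1, map_sub, map_smul, hΔX, hΔ1]
    simp only [sub_tmul, tmul_sub, ← smul_tmul', tmul_smul, smul_sub, smul_add, smul_smul]
    match_scalars <;> first
      | ring1
      | linear_combination -ha
  exact ⟨key x₁ (by ring), key x₂ (by ring)⟩
end

section
/- The comultiplication Δ on A = R[X]/((X - x₁)(X - x₂)) is coassociative: (id ⊗ Δ) ∘ Δ = (Δ ⊗ id) ∘ Δ. -/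
/-!
Δ is determined by its values on 1 and X, and these span A because the relation
X² = (x₁ + x₂)X - x₁x₂ reduces every polynomial to one of degree at most 1. On 1 and X,
coassociativity is a direct expansion in the triple tensor product that uses no relation
between 1 and X.
-/

open Polynomial TensorProduct

theorem AdjoinRoot.span_one_root_eq_top_of_natDegree_le_two {R : Type*} [CommRing R] {p : R[X]}
    (hp : p.Monic) (hdeg : p.natDegree ≤ 2) :
    Submodule.span R {1, AdjoinRoot.root p} = ⊤ := by
  refine Submodule.eq_top_iff'.mpr fun a => ?_
  have hrem : (AdjoinRoot.modByMonicHom hp a).natDegree ≤ 1 := by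
    obtain ⟨q, rfl⟩ := AdjoinRoot.mk_surjective a
    rw [AdjoinRoot.modByMonicHom_mk]
    by_cases h1 : p = 1
    · simp [h1]
    · have := natDegree_modByMonic_lt q hp h1
      omega
  obtain ⟨b, c, hbc⟩ := exists_eq_X_add_C_of_natDegree_le_one hrem
  rw [← AdjoinRoot.mk_leftInverse hp a, hbc, Submodule.mem_span_pair]
  refine ⟨c, b, ?_⟩
  simp only [map_add, map_mul, AdjoinRoot.mk_C, AdjoinRoot.mk_X, Algebra.smul_def,
    AdjoinRoot.algebraMap_eq, mul_one, add_comm]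

theorem coassoc_of_span_pair_eq_top {R A : Type*} [CommRing R] [AddCommGroup A] [Module R A]
    {Δ : A →ₗ[R] A ⊗[R] A} {e x : A} {s t : R} (hspan : Submodule.span R {e, x} = ⊤)
    (he : Δ e = x ⊗ₜ e + e ⊗ₜ x - s • (e ⊗ₜ e)) (hx : Δ x = x ⊗ₜ x - t • (e ⊗ₜ e)) :
    (TensorProduct.assoc R A A A).toLinearMap ∘ₗ map Δ LinearMap.id ∘ₗ Δ =
      map LinearMap.id Δ ∘ₗ Δ := by
  refine LinearMap.ext_on hspan ?_
  rintro _ (rfl | rfl) <;>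
  · simp only [LinearMap.comp_apply, he, hx, map_sub, map_add, map_smul, map_tmul,
      LinearMap.id_coe, id_eq, LinearEquiv.coe_coe, assoc_tmul, tmul_add, tmul_sub, add_tmul,
      sub_tmul, ← smul_tmul', tmul_smul]
    module

/-- The comultiplication on `A = R[X]/((X - x₁)(X - x₂))` is coassociative. -/
theorem stmt9 (R : Type*) [CommRing R] (x₁ x₂ : R)
    (Δ : (Polynomial R ⧸ Ideal.span {(X - C x₁) * (X - C x₂)}) →ₗ[R]
      ((Polynomial R ⧸ Ideal.span {(X - C x₁) * (X - C x₂)}) ⊗[R]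
        (Polynomial R ⧸ Ideal.span {(X - C x₁) * (X - C x₂)})))
    (hΔ1 : Δ 1 =
      (Ideal.Quotient.mk (Ideal.span {(X - C x₁) * (X - C x₂)}) X) ⊗ₜ[R] 1 +
      1 ⊗ₜ[R] (Ideal.Quotient.mk (Ideal.span {(X - C x₁) * (X - C x₂)}) X) -
      (x₁ + x₂) • ((1 : Polynomial R ⧸ Ideal.span {(X - C x₁) * (X - C x₂)}) ⊗ₜ[R] 1))
    (hΔX : Δ (Ideal.Quotient.mk (Ideal.span {(X - C x₁) * (X - C x₂)}) X) =
      (Ideal.Quotient.mk (Ideal.span {(X - C x₁) * (X - C x₂)}) X) ⊗ₜ[R]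
        (Ideal.Quotient.mk (Ideal.span {(X - C x₁) * (X - C x₂)}) X) -
      (x₁ * x₂) • ((1 : Polynomial R ⧸ Ideal.span {(X - C x₁) * (X - C x₂)}) ⊗ₜ[R] 1)) :
    ∀ a : Polynomial R ⧸ Ideal.span {(X - C x₁) * (X - C x₂)},
      (TensorProduct.assoc R _ _ _) ((TensorProduct.map Δ LinearMap.id) (Δ a)) =
        (TensorProduct.map LinearMap.id Δ) (Δ a) := by
  have hdeg : ((X - C x₁) * (X - C x₂)).natDegree ≤ 2 :=
    natDegree_mul_le.trans (add_le_add (natDegree_X_sub_C_le x₁) (natDegree_X_sub_C_le x₂))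
  have hspan := AdjoinRoot.span_one_root_eq_top_of_natDegree_le_two
    ((monic_X_sub_C x₁).mul (monic_X_sub_C x₂)) hdeg
  exact LinearMap.congr_fun (coassoc_of_span_pair_eq_top hspan hΔ1 hΔX)
end

section
/- The comultiplication Δ on A = R[X]/((X - x₁)(X - x₂)) is an A-bimodule map: Δ(a·b) = a·Δ(b) = Δ(a)·b for all a, b ∈ A, where A acts on A ⊗_R A by left multiplication on the left factor and right multiplication on the right factor. -/
/-!
The map `a ↦ (a ⊗ 1) · Δ(1)` is `R`-linear and agrees with `Δ` at `1` and at `x = [X]`, the latter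
because `x² = (x₁ + x₂) x - x₁ x₂`; since `1, x` span `A` over `R`, `Δ(a) = (a ⊗ 1) · Δ(1)` for
all `a`, hence `Δ(ab) = (a ⊗ 1) · (b ⊗ 1) · Δ(1) = (a ⊗ 1) · Δ(b)`. The right action is symmetric,
with `Δ(a) = Δ(1) · (1 ⊗ a)`.
-/

open Polynomial TensorProduct

namespace TensorProduct

variable {R A : Type*} [CommSemiring R] [Semiring A] [Algebra R A]

theorem map_mulLeft_id_apply (a : A) (t : A ⊗[R] A) :
    map (LinearMap.mulLeft R a) LinearMap.id t = (a ⊗ₜ 1) * t := by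
  induction t using TensorProduct.induction_on with
  | zero => simp
  | tmul u v => simp
  | add s t hs ht => simp [hs, ht, mul_add]

theorem map_id_mulRight_apply (b : A) (t : A ⊗[R] A) :
    map LinearMap.id (LinearMap.mulRight R b) t = t * (1 ⊗ₜ b) := by
  induction t using TensorProduct.induction_on with
  | zero => simp
  | tmul u v => simp
  | add s t hs ht => simp [hs, ht, add_mul]

end TensorProduct

namespace Polynomial

variable {R M : Type*} [CommRing R] [AddCommMonoid M] [Module R M]

theorem quotient_span_linearMap_ext_of_natDegree_le_two {f : R[X]} (hf : f.Monic)
    (h2 : f.natDegree ≤ 2) {φ ψ : R[X] ⧸ Ideal.span {f} →ₗ[R] M} (h1 : φ 1 = ψ 1)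
    (hX : φ (Ideal.Quotient.mk _ X) = ψ (Ideal.Quotient.mk _ X)) : φ = ψ := by
  refine (AdjoinRoot.powerBasis' hf).basis.ext fun ⟨i, hi⟩ => ?_
  replace hi : i < 2 := hi.trans_le h2
  rw [PowerBasis.coe_basis, AdjoinRoot.powerBasis'_gen]
  interval_cases i <;> simpa

end Polynomial

section Quadratic

variable {R A : Type*} [CommRing R] [CommRing A] [Algebra R A] {x₁ x₂ : R} {x : A}

theorem tmul_one_mul_of_quadratic
    (hx : (x - algebraMap R A x₁) * (x - algebraMap R A x₂) = 0) :
    (x ⊗ₜ[R] (1 : A)) * (x ⊗ₜ 1 + 1 ⊗ₜ x - (x₁ + x₂) • (1 ⊗ₜ 1)) =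
      x ⊗ₜ x - (x₁ * x₂) • (1 ⊗ₜ[R] (1 : A)) := by
  have hu := congrArg (Algebra.TensorProduct.includeLeft (R := R) (S := R) (B := A)) hx
  simp only [map_mul, map_sub, AlgHom.commutes, map_zero,
    Algebra.TensorProduct.includeLeft_apply] at hu
  have hxx : x ⊗ₜ[R] x = (x ⊗ₜ 1) * (1 ⊗ₜ x) := by simp
  rw [hxx, ← Algebra.TensorProduct.one_def, Algebra.smul_def, Algebra.smul_def, map_add, map_mul]
  linear_combination hu

theorem mul_one_tmul_of_quadratic
    (hx : (x - algebraMap R A x₁) * (x - algebraMap R A x₂) = 0) :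
    (x ⊗ₜ 1 + 1 ⊗ₜ x - (x₁ + x₂) • (1 ⊗ₜ 1)) * ((1 : A) ⊗ₜ[R] x) =
      x ⊗ₜ x - (x₁ * x₂) • (1 ⊗ₜ[R] (1 : A)) := by
  have hv := congrArg (Algebra.TensorProduct.includeRight (R := R) (A := A)) hx
  simp only [map_mul, map_sub, AlgHom.commutes, map_zero,
    Algebra.TensorProduct.includeRight_apply] at hv
  have hxx : x ⊗ₜ[R] x = (x ⊗ₜ 1) * (1 ⊗ₜ x) := by simp
  rw [hxx, ← Algebra.TensorProduct.one_def, Algebra.smul_def, Algebra.smul_def, map_add, map_mul]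
  linear_combination hv

end Quadratic

section Bimodule

variable {R A : Type*} [CommSemiring R] [Semiring A] [Algebra R A] {Δ : A →ₗ[R] A ⊗[R] A}

theorem map_mul_eq_tmul_one_mul (h : ∀ a, Δ a = (a ⊗ₜ 1) * Δ 1) (a b : A) :
    Δ (a * b) = (a ⊗ₜ 1) * Δ b := by
  rw [h (a * b), h b, ← mul_assoc, Algebra.TensorProduct.tmul_mul_tmul, mul_one]

theorem map_mul_eq_mul_one_tmul (h : ∀ a, Δ a = Δ 1 * (1 ⊗ₜ a)) (a b : A) :
    Δ (a * b) = Δ a * (1 ⊗ₜ b) := by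
  rw [h (a * b), h a, mul_assoc, Algebra.TensorProduct.tmul_mul_tmul, mul_one]

end Bimodule

/-- The comultiplication on `A = R[X]/((X - x₁)(X - x₂))` is an `A`-bimodule map:
`Δ(a·b) = a·Δ(b) = Δ(a)·b`, where `A` acts on `A ⊗ A` by multiplication on the
left factor, resp. on the right factor. -/
theorem stmt11 (R : Type*) [CommRing R] (x₁ x₂ : R)
    (Δ : (Polynomial R ⧸ Ideal.span {(X - C x₁) * (X - C x₂)}) →ₗ[R]
      ((Polynomial R ⧸ Ideal.span {(X - C x₁) * (X - C x₂)}) ⊗[R]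
        (Polynomial R ⧸ Ideal.span {(X - C x₁) * (X - C x₂)})))
    (hΔ1 : Δ 1 =
      (Ideal.Quotient.mk (Ideal.span {(X - C x₁) * (X - C x₂)}) X) ⊗ₜ[R] 1 +
      1 ⊗ₜ[R] (Ideal.Quotient.mk (Ideal.span {(X - C x₁) * (X - C x₂)}) X) -
      (x₁ + x₂) • ((1 : Polynomial R ⧸ Ideal.span {(X - C x₁) * (X - C x₂)}) ⊗ₜ[R] 1))
    (hΔX : Δ (Ideal.Quotient.mk (Ideal.span {(X - C x₁) * (X - C x₂)}) X) =
      (Ideal.Quotient.mk (Ideal.span {(X - C x₁) * (X - C x₂)}) X) ⊗ₜ[R]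
        (Ideal.Quotient.mk (Ideal.span {(X - C x₁) * (X - C x₂)}) X) -
      (x₁ * x₂) • ((1 : Polynomial R ⧸ Ideal.span {(X - C x₁) * (X - C x₂)}) ⊗ₜ[R] 1)) :
    ∀ a b : Polynomial R ⧸ Ideal.span {(X - C x₁) * (X - C x₂)},
      Δ (a * b) = (TensorProduct.map (LinearMap.mulLeft R a) LinearMap.id) (Δ b) ∧
      Δ (a * b) = (TensorProduct.map LinearMap.id (LinearMap.mulRight R b)) (Δ a) := by
  have hf : ((X - C x₁) * (X - C x₂)).Monic := (monic_X_sub_C x₁).mul (monic_X_sub_C x₂)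
  have hdeg : ((X - C x₁) * (X - C x₂)).natDegree ≤ 2 := by compute_degree
  have hroot : (Ideal.Quotient.mk (Ideal.span {(X - C x₁) * (X - C x₂)}) X - algebraMap R _ x₁) *
      (Ideal.Quotient.mk _ X - algebraMap R _ x₂) = 0 := by
    rw [← Ideal.Quotient.mk_algebraMap, ← Ideal.Quotient.mk_algebraMap, Polynomial.algebraMap_eq,
      ← map_sub, ← map_sub, ← map_mul, Ideal.Quotient.eq_zero_iff_mem]
    exact Ideal.mem_span_singleton_self _
  have hleft : ∀ a, Δ a = (a ⊗ₜ 1) * Δ 1 := LinearMap.congr_fun <|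
    quotient_span_linearMap_ext_of_natDegree_le_two hf hdeg
      (ψ := LinearMap.mulRight R (Δ 1) ∘ₗ (TensorProduct.mk R _ _).flip 1) (one_mul (Δ 1)).symm
      (by simpa [hΔX, hΔ1] using (tmul_one_mul_of_quadratic hroot).symm)
  have hright : ∀ a, Δ a = Δ 1 * (1 ⊗ₜ a) := LinearMap.congr_fun <|
    quotient_span_linearMap_ext_of_natDegree_le_two hf hdeg
      (ψ := LinearMap.mulLeft R (Δ 1) ∘ₗ TensorProduct.mk R _ _ 1) (mul_one (Δ 1)).symm
      (by simpa [hΔX, hΔ1] using (mul_one_tmul_of_quadratic hroot).symm)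
  intro a b
  rw [map_mulLeft_id_apply, map_id_mulRight_apply]
  exact ⟨map_mul_eq_tmul_one_mul hleft a b, map_mul_eq_mul_one_tmul hright a b⟩
end

section
/- In A = F[U][X]/(X² - UX) over a polynomial ring F[U] with F a field, an element a ∈ A is a zero divisor if and only if a lies in the ideal generated by X or in the ideal generated by X - U. -/
/-!
`X² - UX = X (X - U)` is a product of two non-associated primes `X` and `X - U` of `F[U][X]`.
In `R ⧸ (p q)` with `p, q` such primes, multiples of `p` are killed by the nonzero class
of `q` and vice versa; conversely if `p q ∣ f g` with `p ∤ f` and `q ∤ f`, primality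
gives `p ∣ g` and `q ∣ g`, hence `p q ∣ g`, so the class of `g` is zero.
-/

open Polynomial

section TwoPrimes

variable {R : Type*} [CommRing R]

theorem Prime.mul_dvd_of_dvd_of_dvd {p q g : R} (hq : Prime q) (hqp : ¬ q ∣ p)
    (hpg : p ∣ g) (hqg : q ∣ g) : p * q ∣ g := by
  obtain ⟨k, rfl⟩ := hpg
  obtain ⟨m, rfl⟩ := (hq.dvd_or_dvd hqg).resolve_left hqp
  exact ⟨m, (mul_assoc p q m).symm⟩

theorem Ideal.Quotient.mk_mem_span_mk_iff_dvd {n q : R} (hqn : q ∣ n) (f : R) :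
    Ideal.Quotient.mk (Ideal.span {n}) f ∈ Ideal.span {Ideal.Quotient.mk (Ideal.span {n}) q} ↔
      q ∣ f := by
  rw [← Set.image_singleton, ← Ideal.map_span,
    Ideal.mem_quotient_iff_mem (Ideal.span_singleton_le_span_singleton.mpr hqn),
    Ideal.mem_span_singleton]

theorem Ideal.Quotient.mk_eq_zero_iff_dvd {n : R} (f : R) :
    Ideal.Quotient.mk (Ideal.span {n}) f = 0 ↔ n ∣ f := by
  rw [Ideal.Quotient.eq_zero_iff_mem, Ideal.mem_span_singleton]

theorem Ideal.Quotient.mk_span_prime_mul_ne_zero [IsDomain R] {p q : R} (hp : Prime p)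
    (hq : q ≠ 0) : Ideal.Quotient.mk (Ideal.span {p * q}) q ≠ 0 := by
  rw [Ne, Ideal.Quotient.mk_eq_zero_iff_dvd]
  intro h
  have hp_dvd_one : p ∣ 1 := (mul_dvd_mul_iff_right hq).mp (by rwa [one_mul])
  exact hp.not_isUnit (isUnit_of_dvd_one hp_dvd_one)

theorem Ideal.Quotient.exists_ne_zero_mul_eq_zero_iff_of_prime_mul_prime [IsDomain R]
    {p q : R} (hp : Prime p) (hq : Prime q) (hqp : ¬ q ∣ p) (a : R ⧸ Ideal.span {p * q}) :
    (∃ b : R ⧸ Ideal.span {p * q}, b ≠ 0 ∧ a * b = 0) ↔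
      a ∈ Ideal.span {Ideal.Quotient.mk (Ideal.span {p * q}) p} ∨
        a ∈ Ideal.span {Ideal.Quotient.mk (Ideal.span {p * q}) q} := by
  obtain ⟨f, rfl⟩ := Ideal.Quotient.mk_surjective a
  rw [mk_mem_span_mk_iff_dvd (dvd_mul_right p q), mk_mem_span_mk_iff_dvd (dvd_mul_left q p)]
  constructor
  · rintro ⟨b, hb0, hfb⟩
    obtain ⟨g, rfl⟩ := Ideal.Quotient.mk_surjective b
    rw [← map_mul, mk_eq_zero_iff_dvd] at hfb
    rw [Ne, mk_eq_zero_iff_dvd] at hb0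
    by_contra! hf
    have hpg : p ∣ g := (hp.dvd_or_dvd (dvd_of_mul_right_dvd hfb)).resolve_left hf.1
    have hqg : q ∣ g := (hq.dvd_or_dvd (dvd_of_mul_left_dvd hfb)).resolve_left hf.2
    exact hb0 (hq.mul_dvd_of_dvd_of_dvd hqp hpg hqg)
  · rintro (⟨c, rfl⟩ | ⟨c, rfl⟩)
    · refine ⟨Ideal.Quotient.mk _ q, mk_span_prime_mul_ne_zero hp hq.ne_zero, ?_⟩
      rw [← map_mul, mk_eq_zero_iff_dvd]
      exact ⟨c, by ring⟩
    · refine ⟨Ideal.Quotient.mk _ p, ?_, ?_⟩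
      · rw [mul_comm p q]
        exact mk_span_prime_mul_ne_zero hq hp.ne_zero
      · rw [← map_mul, mk_eq_zero_iff_dvd]
        exact ⟨c, by ring⟩

end TwoPrimes

/-- In `A = F[U][X]/(X² - UX)` over a field `F`, an element is a zero divisor
if and only if it lies in the ideal generated by `X` or in the ideal generated
by `X - U`. -/
theorem stmt12 (F : Type*) [Field F]
    (a : Polynomial (Polynomial F) ⧸
      Ideal.span {(X : Polynomial (Polynomial F)) ^ 2 - C Polynomial.X * X}) :
    (∃ b : Polynomial (Polynomial F) ⧸
        Ideal.span {(X : Polynomial (Polynomial F)) ^ 2 - C Polynomial.X * X},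
      b ≠ 0 ∧ a * b = 0) ↔
    a ∈ Ideal.span {Ideal.Quotient.mk
        (Ideal.span {(X : Polynomial (Polynomial F)) ^ 2 - C Polynomial.X * X}) X} ∨
    a ∈ Ideal.span {Ideal.Quotient.mk
        (Ideal.span {(X : Polynomial (Polynomial F)) ^ 2 - C Polynomial.X * X})
        (X - C Polynomial.X)} := by
  have hfactor : (X : Polynomial (Polynomial F)) ^ 2 - C Polynomial.X * X =
      X * (X - C Polynomial.X) := by ring
  have hnot_dvd : ¬ (X - C Polynomial.X : Polynomial (Polynomial F)) ∣ X := fun h => by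
    simpa using eval_dvd (x := Polynomial.X) h
  revert a
  rw [hfactor]
  exact Ideal.Quotient.exists_ne_zero_mul_eq_zero_iff_of_prime_mul_prime prime_X
    (prime_X_sub_C _) hnot_dvd
end
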